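/- Let G be a connected regular k-partially walk-regular graph on n vertices with eigenvalues λ₁ > λ₂ ≥ ... ≥ λₙ. Let p be a polynomial of degree at most k with Σ_{i=1}^n p(λᵢ) = 0 (i.e., tr p(A) = 0) and with λ(p) = min_{i∈[2,n]} p(λᵢ) < 0 < p(λ₁). Then α_k(G) ≤ n / (1 - p(λ₁)/λ(p)). -/

import Mathlib

open Polynomial Finset

/-- The independence number of a simple graph: the maximum size of a set of
pairwise non-adjacent vertices. -/
noncomputable def SimpleGraph.indepNumFin {V : Type*} [Fintype V] (G : SimpleGraph V) : ℕ :=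
  sSup {m | ∃ s : Finset V, s.card = m ∧ ∀ u ∈ s, ∀ v ∈ s, ¬ G.Adj u v}

/-- The `k`-th power of a graph: distinct vertices are adjacent iff
their distance in `G` is (finite and) at most `k`. -/
def SimpleGraph.power {V : Type*} (G : SimpleGraph V) (k : ℕ) : SimpleGraph V where
  Adj u v := u ≠ v ∧ G.Reachable u v ∧ G.dist u v ≤ k
  symm := by
    constructor
    intro u v ⟨h1, h2, h3⟩
    exact ⟨h1.symm, h2.symm, by rwa [SimpleGraph.dist_comm]⟩
  loopless := by constructor; intro u ⟨h, _⟩; exact h rfl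

/-- The `k`-independence number: the maximum size of a set of vertices at
pairwise distance greater than `k`. -/
noncomputable def SimpleGraph.kIndepNum {V : Type*} [Fintype V] (G : SimpleGraph V) (k : ℕ) : ℕ :=
  (G.power k).indepNumFin

/-!
Let `M = p(A)`. Since `tr M = ∑ p(λᵢ) = 0` and partial walk-regularity makes the diagonal of
every `Aˡ`, `l ≤ k`, constant, `M` has zero diagonal; since `(Aˡ)ᵤᵥ` counts walks of length `l`,
`Mᵤᵥ = 0` whenever `u, v` are at distance `> k`. Hence `M` vanishes on `S × S` for every
`k`-independent set `S`. The spectrum of `M` lies in `{p(λ₁)} ∪ [λ(p), ∞)`, so `M - λ(p) I ⪰ 0`,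
and `M 𝟙 = p(λ₁) 𝟙` because `λ₁` is the valency. Evaluating the quadratic form of `M - λ(p) I` at
`n 𝟙_S - |S| 𝟙` gives `|S| (p(λ₁) - λ(p)) ≤ -n λ(p)`.
-/

open Matrix

theorem le_div_one_sub_div_of_mul_sub_le {S N θ μ : ℝ} (hμ : μ < 0) (hθμ : μ < θ)
    (h : S * (θ - μ) ≤ N * -μ) : S ≤ N / (1 - θ / μ) := by
  have hμ' := hμ.ne
  rw [show 1 - θ / μ = (θ - μ) / -μ by field_simp; ring, div_div_eq_mul_div,
    le_div_iff₀ (sub_pos.mpr hθμ)]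
  exact h

namespace Polynomial

variable {K ι κ : Type*} [Field K] [Fintype ι] [Fintype κ]

theorem roots_prod_univ_X_sub_C (a : ι → K) : (∏ i, (X - C (a i))).roots = univ.val.map a := by
  rw [roots_prod _ _ (prod_ne_zero_iff.mpr fun i _ => X_sub_C_ne_zero (a i))]
  simp

theorem sum_comp_eq_of_prod_X_sub_C_eq {M : Type*} [AddCommMonoid M] {a : ι → K} {b : κ → K}
    (h : ∏ i, (X - C (a i)) = ∏ j, (X - C (b j))) (f : K → M) :
    ∑ i, f (a i) = ∑ j, f (b j) := by
  have := congrArg (fun q : K[X] => (q.roots.map f).sum) h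
  simp only [roots_prod_univ_X_sub_C, Multiset.map_map] at this
  rwa [sum_eq_multiset_sum, sum_eq_multiset_sum]

end Polynomial

namespace Matrix

variable {ι κ K : Type*} [Fintype ι] [Fintype κ] [Field K]

theorem apply_self_eq_zero_of_trace_eq_zero [CharZero K] {M : Matrix ι ι K}
    (hdiag : ∀ u v, M u u = M v v) (htr : M.trace = 0) (u : ι) : M u u = 0 := by
  have : (Fintype.card ι : K) * M u u = 0 := by
    rw [← htr, trace, ← nsmul_eq_mul, ← card_univ, ← sum_const]
    exact sum_congr rfl fun v _ => hdiag u v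
  exact (mul_eq_zero.mp this).resolve_left (Nat.cast_ne_zero.mpr (Fintype.card_pos_iff.mpr ⟨u⟩).ne')

variable [DecidableEq ι]

theorem spectrum_eq_range_of_charpoly_eq_prod {A : Matrix ι ι K} {lam : κ → K}
    (h : A.charpoly = ∏ i, (X - C (lam i))) : spectrum K A = Set.range lam := by
  ext x
  rw [mem_spectrum_iff_isRoot_charpoly, h, IsRoot, eval_prod, prod_eq_zero_iff]
  simp [sub_eq_zero, eq_comm]

theorem trace_eq_sum_of_charpoly_eq_prod {A : Matrix ι ι K} {lam : κ → K}
    (h : A.charpoly = ∏ i, (X - C (lam i))) : A.trace = ∑ i, lam i := by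
  have hsplit : A.charpoly.Splits := h ▸ Splits.prod fun i _ => Splits.X_sub_C (lam i)
  rw [trace_eq_sum_roots_charpoly_of_splits hsplit, h, roots_prod_univ_X_sub_C]
  rfl

theorem aeval_apply (A : Matrix ι ι K) (p : K[X]) (u v : ι) :
    aeval A p u v = ∑ l ∈ range (p.natDegree + 1), p.coeff l * (A ^ l) u v := by
  simp [aeval_eq_sum_range, Matrix.sum_apply]

theorem aeval_apply_self_eq {A : Matrix ι ι K} {p : K[X]} {u v : ι}
    (h : ∀ l ≤ p.natDegree, (A ^ l) u u = (A ^ l) v v) : aeval A p u u = aeval A p v v := by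
  simp only [aeval_apply]
  exact sum_congr rfl fun l hl => by rw [h l (Nat.lt_succ_iff.mp (mem_range.mp hl))]

theorem aeval_apply_eq_zero {A : Matrix ι ι K} {p : K[X]} {u v : ι}
    (h : ∀ l ≤ p.natDegree, (A ^ l) u v = 0) : aeval A p u v = 0 := by
  rw [aeval_apply]
  exact sum_eq_zero fun l hl => by rw [h l (Nat.lt_succ_iff.mp (mem_range.mp hl)), mul_zero]

theorem aeval_mulVec_of_mulVec_eq_smul {A : Matrix ι ι K} {t : K} {x : ι → K}
    (h : A *ᵥ x = t • x) (p : K[X]) : aeval A p *ᵥ x = p.eval t • x := by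
  rw [← toLinAlgEquiv'_apply, ← aeval_algHom_apply]
  exact Module.End.aeval_apply_of_mem_apply_eq_smul (by simpa using h)

theorem card_mul_sub_le_of_posSemidef {M : Matrix ι ι ℝ} {θ μ : ℝ} (hμ : μ ≤ 0)
    (hM : (M - μ • 1).PosSemidef) (hM1 : M *ᵥ 1 = θ • 1) {s : Finset ι}
    (hs : ∀ u ∈ s, ∀ v ∈ s, M u v = 0) :
    #s * (θ - μ) ≤ Fintype.card ι * -μ := by
  set N : ℝ := (Fintype.card ι : ℝ)
  set S : ℝ := (#s : ℝ)
  set x : ι → ℝ := fun u => if u ∈ s then 1 else 0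
  have hsymm : Mᵀ = M := by
    have := hM.isHermitian
    rwa [IsHermitian, conjTranspose_eq_transpose_of_trivial, transpose_sub, transpose_smul,
      transpose_one, sub_left_inj] at this
  have hxx : x ⬝ᵥ x = S := by simp [x, S, dotProduct]
  have hx1 : x ⬝ᵥ 1 = S := by simp [x, S, dotProduct]
  have h1x : (1 : ι → ℝ) ⬝ᵥ x = S := by rw [dotProduct_comm, hx1]
  have h11 : (1 : ι → ℝ) ⬝ᵥ 1 = N := by simp [N, dotProduct]
  have hxMx : x ⬝ᵥ (M *ᵥ x) = 0 := by
    simp only [x, dotProduct, mulVec, mul_ite, ite_mul, mul_one, one_mul, mul_zero, zero_mul,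
      sum_ite_mem, univ_inter]
    exact sum_eq_zero fun u hu => sum_eq_zero fun v hv => hs u hu v hv
  have h1Mx : (1 : ι → ℝ) ⬝ᵥ (M *ᵥ x) = θ * S := by
    rw [dotProduct_mulVec, ← mulVec_transpose, hsymm, hM1, dotProduct_comm, dotProduct_smul,
      hx1, smul_eq_mul]
  have hq := hM.dotProduct_mulVec_nonneg (N • x - S • 1)
  simp only [star_trivial, sub_mulVec, smul_mulVec, one_mulVec, mulVec_sub, mulVec_smul,
    dotProduct_sub, sub_dotProduct, smul_dotProduct, dotProduct_smul, hM1, hxx, hx1, h1x, h11,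
    hxMx, h1Mx, smul_eq_mul] at hq
  have key : 0 ≤ N * S * (N * -μ - S * (θ - μ)) := by linarith
  rcases (show (0 : ℝ) ≤ S from Nat.cast_nonneg _).eq_or_lt with hS | hS
  · rw [← hS, zero_mul]
    exact mul_nonneg (Nat.cast_nonneg _) (neg_nonneg.mpr hμ)
  · have hN : 0 < N := hS.trans_le (Nat.cast_le.mpr (card_le_univ s))
    linarith [nonneg_of_mul_nonneg_right key (mul_pos hN hS)]

end Matrix

namespace Matrix.IsHermitian

open scoped MatrixOrder

variable {ι κ : Type*} [Fintype ι] [DecidableEq ι] [Fintype κ] {A : Matrix ι ι ℝ}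

theorem trace_aeval_eq_sum (hA : A.IsHermitian) {lam : κ → ℝ}
    (h : A.charpoly = ∏ i, (X - C (lam i))) (p : ℝ[X]) :
    (aeval A p).trace = ∑ i, p.eval (lam i) := by
  rw [← cfc_polynomial p A hA.isSelfAdjoint,
    trace_eq_sum_of_charpoly_eq_prod (hA.charpoly_cfc_eq _)]
  simpa using sum_comp_eq_of_prod_X_sub_C_eq (hA.charpoly_eq.symm.trans h) p.eval

theorem posSemidef_aeval_sub_smul_one (hA : A.IsHermitian) (p : ℝ[X]) {c : ℝ}
    (h : ∀ x ∈ spectrum ℝ A, c ≤ p.eval x) : (aeval A p - c • 1).PosSemidef := by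
  rw [← nonneg_iff_posSemidef, sub_nonneg, ← cfc_polynomial p A hA.isSelfAdjoint,
    ← Algebra.algebraMap_eq_smul_one]
  exact algebraMap_le_cfc _ c A h

end Matrix.IsHermitian

namespace SimpleGraph

variable {V : Type*} [Fintype V] {G : SimpleGraph V}

theorem exists_card_eq_indepNumFin (G : SimpleGraph V) :
    ∃ s : Finset V, s.card = G.indepNumFin ∧ ∀ u ∈ s, ∀ v ∈ s, ¬ G.Adj u v :=
  Nat.sSup_mem (s := {m | ∃ s : Finset V, s.card = m ∧ ∀ u ∈ s, ∀ v ∈ s, ¬ G.Adj u v})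
    ⟨0, ∅, by simp⟩ ⟨Fintype.card V, by rintro m ⟨s, rfl, -⟩; exact card_le_univ s⟩

variable [DecidableEq V] [DecidableRel G.Adj]

theorem adjMatrix_pow_apply_eq_zero_of_not_power_adj {R : Type*} [Semiring R] {u v : V}
    {k l : ℕ} (huv : u ≠ v) (h : ¬ (G.power k).Adj u v) (hl : l ≤ k) :
    (G.adjMatrix R ^ l) u v = 0 := by
  rw [adjMatrix_pow_apply_eq_card_walk, Fintype.card_eq_zero_iff.mpr ?_, Nat.cast_zero]
  exact ⟨fun ⟨w, hw⟩ => h ⟨huv, w.reachable, (dist_le w).trans (hw ▸ hl)⟩⟩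

theorem IsRegularOfDegree.isGreatest_spectrum_adjMatrix [Nonempty V] {d : ℕ}
    (hreg : G.IsRegularOfDegree d) : IsGreatest (spectrum ℝ (G.adjMatrix ℝ)) d := by
  refine ⟨?_, fun x hx => ?_⟩
  · rw [← spectrum_toLin']
    refine Module.End.HasEigenvalue.mem_spectrum
      (Module.End.hasEigenvalue_of_hasEigenvector (x := Function.const V 1) ⟨?_, by simp⟩)
    rw [Module.End.mem_eigenspace_iff, toLin'_apply]
    ext v
    simp [hreg v]
  · open scoped MatrixOrder in
    have hlap : G.lapMatrix ℝ = algebraMap ℝ _ d - G.adjMatrix ℝ := by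
      rw [lapMatrix, degMatrix, algebraMap_eq_diagonal]
      congr
      ext v
      simp [hreg v]
    have hle : G.adjMatrix ℝ ≤ algebraMap ℝ _ d := by
      rw [Matrix.le_iff, ← hlap]
      exact G.posSemidef_lapMatrix ℝ
    exact (le_algebraMap_iff_spectrum_le (G.isHermitian_adjMatrix ℝ)).mp hle x hx

end SimpleGraph

theorem generalized_hoffman_bound_general {n d k : ℕ} (hn : 0 < n) (G : SimpleGraph (Fin n))
    [DecidableRel G.Adj] (hreg : G.IsRegularOfDegree d)
    (hwr : ∀ l ≤ k, ∀ u v : Fin n,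
      ((G.adjMatrix ℝ) ^ l) u u = ((G.adjMatrix ℝ) ^ l) v v)
    (lam : Fin n → ℝ) (hlam : Antitone lam)
    (hchar : (G.adjMatrix ℝ).charpoly = ∏ i, (X - C (lam i)))
    (p : Polynomial ℝ) (hp : p.natDegree ≤ k)
    (htr : ∑ i, p.eval (lam i) = 0) (lamp : ℝ)
    (hlamp : IsLeast {x | ∃ i, i ≠ ⟨0, hn⟩ ∧ x = p.eval (lam i)} lamp)
    (hneg : lamp < 0) (hpos : 0 < p.eval (lam ⟨0, hn⟩)) :
    (G.kIndepNum k : ℝ) ≤ n / (1 - p.eval (lam ⟨0, hn⟩) / lamp) := by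
  have : Nonempty (Fin n) := ⟨⟨0, hn⟩⟩
  have hA := G.isHermitian_adjMatrix ℝ
  have hspec := spectrum_eq_range_of_charpoly_eq_prod hchar
  have hlam₀ : lam ⟨0, hn⟩ = d := by
    obtain ⟨⟨i, hi⟩, hle⟩ := hspec ▸ hreg.isGreatest_spectrum_adjMatrix
    exact le_antisymm (hle ⟨_, rfl⟩) (hi ▸ hlam (show (⟨0, hn⟩ : Fin n) ≤ i from Nat.zero_le _))
  have hM1 : aeval (G.adjMatrix ℝ) p *ᵥ 1 = p.eval (lam ⟨0, hn⟩) • 1 :=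
    hlam₀ ▸ aeval_mulVec_of_mulVec_eq_smul (by ext v; simp [hreg v]) p
  have hPSD := hA.posSemidef_aeval_sub_smul_one p (c := lamp) <| by
    rw [hspec]
    rintro - ⟨i, rfl⟩
    rcases eq_or_ne i ⟨0, hn⟩ with rfl | hi
    · linarith
    · exact hlamp.2 ⟨i, hi, rfl⟩
  have hdiag := apply_self_eq_zero_of_trace_eq_zero
    (fun u v => aeval_apply_self_eq fun l hl => hwr l (hl.trans hp) u v)
    (hA.trace_aeval_eq_sum hchar p ▸ htr)
  obtain ⟨s, hs, hs_indep⟩ := (G.power k).exists_card_eq_indepNumFin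
  have hbound := card_mul_sub_le_of_posSemidef hneg.le hPSD hM1 (s := s) fun u hu v hv => by
    rcases eq_or_ne u v with rfl | huv
    · exact hdiag u
    · exact aeval_apply_eq_zero fun l hl =>
        G.adjMatrix_pow_apply_eq_zero_of_not_power_adj huv (hs_indep u hu v hv) (hl.trans hp)
  rw [Fintype.card_fin] at hbound
  rw [SimpleGraph.kIndepNum, ← hs]
  exact le_div_one_sub_div_of_mul_sub_le hneg (hneg.trans hpos) hbound

/-- **Generalized Hoffman bound.** Let `G` be a connected regular `k`-partially
walk-regular graph with eigenvalues `λ₁ > λ₂ ≥ ⋯ ≥ λₙ`, and let `p` be a polynomial of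
degree at most `k` with `Σᵢ p(λᵢ) = 0` and `λ(p) = min_{i∈[2,n]} p(λᵢ) < 0 < p(λ₁)`.
Then `α_k(G) ≤ n / (1 - p(λ₁)/λ(p))`. -/
theorem generalized_hoffman_bound {n d k : ℕ} (hn : 0 < n) (G : SimpleGraph (Fin n))
    [DecidableRel G.Adj] (hconn : G.Connected) (hreg : G.IsRegularOfDegree d)
    (hwr : ∀ l ≤ k, ∀ u v : Fin n,
      ((G.adjMatrix ℝ) ^ l) u u = ((G.adjMatrix ℝ) ^ l) v v)
    (lam : Fin n → ℝ) (hlam : Antitone lam)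
    (hgap : ∀ i, i ≠ ⟨0, hn⟩ → lam i < lam ⟨0, hn⟩)
    (hchar : (G.adjMatrix ℝ).charpoly = ∏ i, (X - C (lam i)))
    (p : Polynomial ℝ) (hp : p.natDegree ≤ k)
    (htr : ∑ i, p.eval (lam i) = 0) (lamp : ℝ)
    (hlamp : IsLeast {x | ∃ i, i ≠ ⟨0, hn⟩ ∧ x = p.eval (lam i)} lamp)
    (hneg : lamp < 0) (hpos : 0 < p.eval (lam ⟨0, hn⟩)) :
    (G.kIndepNum k : ℝ) ≤ n / (1 - p.eval (lam ⟨0, hn⟩) / lamp) :=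
  generalized_hoffman_bound_general hn G hreg hwr lam hlam hchar p hp htr lamp hlamp hneg hpos
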